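/- Let the friendship graph have vertex cover number 1 (a star plus isolated vertices). Then for any k, a balanced k-partition that is EFX (and EF1 and MMS) always exists: place the star center together with the ⌈n/k⌉−1 highest-valued leaves (filling with isolated agents if needed) into one part and partition the rest arbitrarily. -/

import Mathlib

open Finset

variable {V : Type*} [Fintype V] [DecidableEq V]

/-- The `i`-th part of the `k`-partition given by `π`. -/
def cell {k : ℕ} (π : V → Fin k) (i : Fin k) : Finset V :=
  Finset.univ.filter fun v => π v = i

/-- A `k`-partition is balanced if every part has size `⌊n/k⌋` or `⌈n/k⌉`. -/
def IsBalanced {k : ℕ} (π : V → Fin k) : Prop :=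
  ∀ i : Fin k, Fintype.card V / k ≤ (cell π i).card ∧
    (cell π i).card ≤ (Fintype.card V + k - 1) / k

/-- Additive utility of agent `a` for a set `S` of agents. -/
def autil (u : V → V → ℕ) (a : V) (S : Finset V) : ℕ := ∑ b ∈ S, u a b

/-- The maximin share of agent `a` w.r.t. additive utilities `u`:
the largest `m` such that some balanced `k`-partition gives `a` utility
at least `m` in every part. -/
noncomputable def mmsShareA (k : ℕ) (u : V → V → ℕ) (a : V) : ℕ :=
  sSup {m : ℕ | ∃ π : V → Fin k, IsBalanced π ∧ ∀ i : Fin k, m ≤ autil u a (cell π i)}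

/-!
With vertex cover `{c}`, an agent `a ≠ c` values nobody but `c`, and `c` does not value itself.
Put `c` into a part with `⌈n/k⌉ - 1` other agents that `c` values most and complete it to a
balanced partition. A part of a balanced partition has at most `⌈n/k⌉` members, so no part, even
with one member dropped, is worth more to `c` than its own: EFX, EF1 and MMS hold for `c`. Any
other agent stops envying a part once `c` is removed from it; and if it does not share a part with
`c`, then `k ≥ 2`, every balanced partition has a part without `c`, and its maximin share is `0`.
-/

lemma Nat.add_sub_one_div_eq (n : ℕ) {k : ℕ} (hk : 0 < k) :
    (n + k - 1) / k = n / k + if 0 < n % k then 1 else 0 := by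
  have hk1 : k - 1 < k := Nat.sub_lt hk one_pos
  rw [Nat.add_sub_assoc (Nat.one_le_iff_ne_zero.2 hk.ne'), Nat.add_div hk, Nat.div_eq_of_lt hk1,
    Nat.mod_eq_of_lt hk1, add_zero]
  grind

lemma Nat.add_sub_one_div_pos_le {n k : ℕ} (hn : 0 < n) (hk : 0 < k) :
    0 < (n + k - 1) / k ∧ (n + k - 1) / k ≤ n := by
  refine ⟨Nat.div_pos (by omega) hk, Nat.div_le_of_le_mul ?_⟩
  obtain ⟨m, rfl⟩ := Nat.exists_eq_add_one_of_ne_zero hn.ne'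
  have := Nat.le_mul_of_pos_left m hk
  rw [Nat.mul_add_one]
  omega

section Partition

variable {W : Type*} [Fintype W] {k : ℕ}

omit [DecidableEq V]

@[simp]
lemma mem_cell {π : V → Fin k} {i : Fin k} {v : V} : v ∈ cell π i ↔ π v = i := by
  simp [cell]

lemma mem_cell_self (π : V → Fin k) (v : V) : v ∈ cell π (π v) := mem_cell.2 rfl

lemma card_cell_comp_equiv (π : W → Fin k) (σ : V ≃ W) (i : Fin k) :
    #(cell (π ∘ σ) i) = #(cell π i) := by
  have : cell (π ∘ σ) i = (cell π i).map σ.symm.toEmbedding := by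
    ext v
    simp
  rw [this, card_map]

lemma IsBalanced.comp_equiv {π : W → Fin k} (hπ : IsBalanced π) (σ : V ≃ W) :
    IsBalanced (π ∘ σ) := by
  intro i
  rw [card_cell_comp_equiv, Fintype.card_congr σ]
  exact hπ i

def roundRobin (n : ℕ) (hk : 0 < k) : Fin n → Fin k := fun i => ⟨i % k, Nat.mod_lt _ hk⟩

lemma card_cell_roundRobin (n : ℕ) (hk : 0 < k) (j : Fin k) :
    #(cell (roundRobin n hk) j) = n / k + if (j : ℕ) < n % k then 1 else 0 := by
  have hcell : cell (roundRobin n hk) j = univ.filter fun i : Fin n => (i : ℕ) ≡ j [MOD k] := by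
    ext i
    simp [roundRobin, Fin.ext_iff, Nat.ModEq, Nat.mod_eq_of_lt j.isLt]
  have hcount := Nat.count_modEq_card n hk j
  rw [Nat.mod_eq_of_lt j.isLt] at hcount
  rw [hcell, ← hcount, Nat.count_eq_card_filter_range, ← Nat.Iio_eq_range,
    ← Fin.map_valEmbedding_univ, filter_map, card_map]
  rfl

lemma isBalanced_roundRobin (n : ℕ) (hk : 0 < k) : IsBalanced (roundRobin n hk) := by
  intro j
  rw [Fintype.card_fin, card_cell_roundRobin, Nat.add_sub_one_div_eq n hk]
  split_ifs <;> omega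

lemma card_cell_roundRobin_zero (n : ℕ) (hk : 0 < k) :
    #(cell (roundRobin n hk) ⟨0, hk⟩) = (n + k - 1) / k := by
  rw [card_cell_roundRobin, Nat.add_sub_one_div_eq n hk]

end Partition

theorem exists_isBalanced_cell_eq {k : ℕ} (hk : 0 < k) (T : Finset V)
    (hT : #T = (Fintype.card V + k - 1) / k) :
    ∃ π : V → Fin k, IsBalanced π ∧ ∃ i, cell π i = T := by
  let π₀ := roundRobin (Fintype.card V) hk ∘ Fintype.equivFin V
  let C := cell π₀ ⟨0, hk⟩
  have hCT : #T = #C := by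
    rw [hT, card_cell_comp_equiv, card_cell_roundRobin_zero]
  let σ := (Finset.equivOfCardEq hCT).extendSubtype
  refine ⟨π₀ ∘ σ, (isBalanced_roundRobin _ hk).comp_equiv _ |>.comp_equiv σ, ⟨0, hk⟩, ?_⟩
  ext v
  rw [mem_cell, Function.comp_apply, ← mem_cell]
  by_cases hv : v ∈ T
  · exact iff_of_true (Equiv.extendSubtype_mem _ v hv) hv
  · exact iff_of_false (Equiv.extendSubtype_not_mem _ v hv) hv

lemma exists_subset_card_eq_forall_sum_le {α M : Type*} [AddCommMonoid M] [LinearOrder M]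
    [CanonicallyOrderedAdd M] (L : Finset α) (f : α → M) {m : ℕ} (hm : m ≤ #L) :
    ∃ T ⊆ L, #T = m ∧ ∀ S ⊆ L, #S ≤ m → ∑ x ∈ S, f x ≤ ∑ x ∈ T, f x := by
  obtain ⟨T, hT, hmax⟩ := exists_max_image (L.powersetCard m) (fun X => ∑ x ∈ X, f x)
    (powersetCard_nonempty.2 hm)
  rw [mem_powersetCard] at hT
  refine ⟨T, hT.1, hT.2, fun S hSL hSm => ?_⟩
  obtain ⟨X, hSX, hXL, hXm⟩ := exists_subsuperset_card_eq hSL hSm hm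
  exact (sum_le_sum_of_subset hSX).trans (hmax X (mem_powersetCard.2 ⟨hXL, hXm⟩))

section Star

variable (u : V → V → ℕ) (c : V) {k : ℕ}

lemma exists_best_bundle (hcc : u c c = 0) {s : ℕ} (hs : 0 < s) (hsn : s ≤ Fintype.card V) :
    ∃ T : Finset V, #T = s ∧ c ∈ T ∧
      ∀ S : Finset V, #(S.erase c) < s → autil u c S ≤ autil u c T := by
  obtain ⟨T₀, hT₀L, hT₀card, hT₀max⟩ := exists_subset_card_eq_forall_sum_le (univ.erase c) (u c)
    (m := s - 1) (by rw [card_erase_of_mem (mem_univ c), card_univ]; omega)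
  have hcT₀ : c ∉ T₀ := fun h => notMem_erase c univ (hT₀L h)
  refine ⟨insert c T₀, by rw [card_insert_of_notMem hcT₀]; omega, mem_insert_self c T₀,
    fun S hS => ?_⟩
  calc autil u c S = ∑ x ∈ S.erase c, u c x := (sum_erase S hcc).symm
    _ ≤ ∑ x ∈ T₀, u c x := hT₀max _ (erase_subset_erase c (subset_univ S)) (by omega)
    _ = autil u c (insert c T₀) := by rw [autil, sum_insert hcT₀, hcc, zero_add]

omit [Fintype V] [DecidableEq V] in
lemma autil_le_autil_of_ne_center (hstar : ∀ a b, u a b ≠ 0 → a = c ∨ b = c) {a : V}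
    (ha : a ≠ c) {S S' : Finset V} (h : c ∈ S → c ∈ S') : autil u a S ≤ autil u a S' :=
  sum_le_sum_of_ne_zero fun x hx hux => by
    obtain rfl := (hstar a x hux).resolve_left ha
    exact h hx

lemma center_autil_erase_erase_le {π : V → Fin k} (hbal : IsBalanced π) {x : ℕ}
    (hbest : ∀ S : Finset V, #(S.erase c) < (Fintype.card V + k - 1) / k → autil u c S ≤ x)
    (b d : V) : autil u c (((cell π (π b)).erase b).erase d) ≤ x :=
  hbest _ <| calc
    #((((cell π (π b)).erase b).erase d).erase c) ≤ #((cell π (π b)).erase b) :=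
      card_erase_le.trans card_erase_le
    _ < #(cell π (π b)) := card_erase_lt_of_mem (mem_cell_self π b)
    _ ≤ _ := (hbal _).2

omit [DecidableEq V] in
lemma mmsShareA_le {a : V} {x : ℕ}
    (h : ∀ π : V → Fin k, IsBalanced π → ∃ i, autil u a (cell π i) ≤ x) :
    mmsShareA k u a ≤ x :=
  csSup_le' fun _ ⟨π, hπ, hm⟩ => let ⟨i, hi⟩ := h π hπ; (hm i).trans hi

lemma mmsShareA_center_le {x : ℕ}
    (hbest : ∀ S : Finset V, #(S.erase c) < (Fintype.card V + k - 1) / k → autil u c S ≤ x) :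
    mmsShareA k u c ≤ x :=
  mmsShareA_le u fun π hπ =>
    ⟨π c, hbest _ ((card_erase_lt_of_mem (mem_cell_self π c)).trans_le (hπ _).2)⟩

lemma mmsShareA_le_of_ne_center (hstar : ∀ a b, u a b ≠ 0 → a = c ∨ b = c) {a : V}
    (ha : a ≠ c) (π : V → Fin k) : mmsShareA k u a ≤ autil u a (cell π (π a)) := by
  by_cases hca : c ∈ cell π (π a)
  · exact mmsShareA_le u fun π' _ =>
      ⟨π' a, autil_le_autil_of_ne_center u c hstar ha fun _ => hca⟩
  · have : Nontrivial (Fin k) := ⟨⟨π c, π a, fun h => hca (h ▸ mem_cell_self π c)⟩⟩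
    refine mmsShareA_le u fun π' _ => ?_
    obtain ⟨j, hj⟩ := exists_ne (π' c)
    exact ⟨j, autil_le_autil_of_ne_center u c hstar ha fun hc => absurd (mem_cell.1 hc) hj.symm⟩

end Star

theorem stmt18_general (G : SimpleGraph V) (c : V)
    (hvc : ∀ x y : V, G.Adj x y → x = c ∨ y = c)
    (u : V → V → ℕ) (hu : ∀ a b : V, 0 < u a b ↔ G.Adj a b)
    (k : ℕ) (hk : 0 < k) :
    ∃ π : V → Fin k, IsBalanced π ∧
      (∀ a b : V, ∀ d ∈ (cell π (π b)).erase b, G.Adj a d →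
        autil u a (((cell π (π b)).erase b).erase d) ≤ autil u a (cell π (π a))) ∧
      (∀ a b : V, ∃ d : V,
        autil u a (((cell π (π b)).erase b).erase d) ≤ autil u a (cell π (π a))) ∧
      ∀ a : V, mmsShareA k u a ≤ autil u a (cell π (π a)) := by
  have hstar : ∀ a b, u a b ≠ 0 → a = c ∨ b = c :=
    fun a b h => hvc a b ((hu a b).1 (Nat.pos_of_ne_zero h))
  have hcc : u c c = 0 := Nat.eq_zero_of_not_pos fun h => G.irrefl ((hu c c).1 h)
  obtain ⟨hs, hsn⟩ := Nat.add_sub_one_div_pos_le (Fintype.card_pos_iff.2 ⟨c⟩) hk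
  obtain ⟨T, hTcard, hcT, hbest⟩ := exists_best_bundle u c hcc hs hsn
  obtain ⟨π, hbal, i, hπT⟩ := exists_isBalanced_cell_eq hk T hTcard
  have hci : π c = i := mem_cell.1 (hπT.symm ▸ hcT)
  rw [← hπT, ← hci] at hbest
  have envy_le : ∀ a b d, a = c ∨ d = c →
      autil u a (((cell π (π b)).erase b).erase d) ≤ autil u a (cell π (π a)) := by
    intro a b d hd
    by_cases ha : a = c
    · subst ha
      exact center_autil_erase_erase_le u a hbal hbest b d
    · obtain rfl := hd.resolve_left ha
      exact autil_le_autil_of_ne_center u d hstar ha fun h => absurd h (notMem_erase _ _)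
  refine ⟨π, hbal, fun a b d _ had => envy_le a b d (hvc a d had),
    fun a b => ⟨c, envy_le a b c (Or.inr rfl)⟩, fun a => ?_⟩
  by_cases ha : a = c
  · subst ha
    exact mmsShareA_center_le u a hbest
  · exact mmsShareA_le_of_ne_center u c hstar ha π

/-- If the friendship graph has vertex cover number at most 1 (vertex cover `{c}`,
i.e. a star plus isolated vertices), then for any `k` there is a balanced
`k`-partition that is simultaneously EFX, EF1 and MMS (additive utilities). -/
theorem stmt18 (G : SimpleGraph V) [DecidableRel G.Adj] (c : V)
    (hvc : ∀ x y : V, G.Adj x y → x = c ∨ y = c)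
    (u : V → V → ℕ) (hu : ∀ a b : V, 0 < u a b ↔ G.Adj a b)
    (k : ℕ) (hk : 0 < k) :
    ∃ π : V → Fin k, IsBalanced π ∧
      (∀ a b : V, ∀ d ∈ (cell π (π b)).erase b, G.Adj a d →
        autil u a (((cell π (π b)).erase b).erase d) ≤ autil u a (cell π (π a))) ∧
      (∀ a b : V, ∃ d : V,
        autil u a (((cell π (π b)).erase b).erase d) ≤ autil u a (cell π (π a))) ∧
      ∀ a : V, mmsShareA k u a ≤ autil u a (cell π (π a)) :=
  stmt18_general G c hvc u hu k hk
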